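/- arXiv:1610.01681 — 5 statements merged into one kernel-verified Lean document; each statement's English description precedes it below -/
import Mathlib

section
/- Let (R, m) be a commutative local ring with maximal ideal m, let F = (Fin n → R) be a finite free R-module, and let φ : F → F be an R-linear endomorphism. Let F_∞ denote the direct limit of the ℕ-indexed directed system F → F → F → ⋯ in which every object is F and every transition map from stage i to stage j is φ^(j−i). Then (R/m) ⊗_R F_∞ = 0 if and only if the induced endomorphism of the (R/m)-vector space F/mF is nilpotent. -/
open TensorProduct


theorem telescope_directedSystem {R V : Type*} [CommRing R] [AddCommGroup V] [Module R V]
    (ψ : V →ₗ[R] V) :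
    DirectedSystem (fun _ : ℕ => V) (fun i j (_ : i ≤ j) => ⇑(ψ ^ (j - i))) where
  map_self i x := by simp
  map_map {k j i} hij hjk x := by
    simp only [← LinearMap.comp_apply, ← Module.End.mul_eq_comp, ← pow_add]
    congr 2
    omega

/-- The mapping telescope of an endomorphism of a finitely generated module vanishes iff the
endomorphism is nilpotent. -/
theorem telescope_subsingleton_iff_isNilpotent
    {R V : Type*} [CommRing R] [AddCommGroup V] [Module R V] [Module.Finite R V]
    (ψ : V →ₗ[R] V) :
    Subsingleton (Module.DirectLimit (fun _ : ℕ => V) (fun i j _ => ψ ^ (j - i))) ↔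
      IsNilpotent ψ := by
  haveI := telescope_directedSystem ψ
  constructor
  · intro h
    obtain ⟨s, hs⟩ := Module.Finite.fg_top (R := R) (M := V)
    have key : ∀ g : V, ∃ N : ℕ, (ψ ^ N) g = 0 := by
      intro g
      have h0 : Module.DirectLimit.of R ℕ (fun _ : ℕ => V) (fun i j _ => ψ ^ (j - i)) 0 g = 0 :=
        Subsingleton.elim _ _
      obtain ⟨j, hij, hj⟩ := Module.DirectLimit.of.zero_exact h0
      exact ⟨j, by simpa using hj⟩
    choose N hN using key
    refine ⟨s.sup N, ?_⟩
    have hle : (⊤ : Submodule R V) ≤ LinearMap.ker (ψ ^ s.sup N) := by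
      rw [← hs, Submodule.span_le]
      intro g hg
      have hNg : N g ≤ s.sup N := Finset.le_sup hg
      have : ψ ^ s.sup N = ψ ^ (s.sup N - N g) * ψ ^ N g := by
        rw [← pow_add]; congr 1; omega
      simp only [SetLike.mem_coe, LinearMap.mem_ker, this, Module.End.mul_apply, hN g,
        map_zero]
    ext x
    simpa using hle (Submodule.mem_top (x := x))
  · rintro ⟨N, hN⟩
    refine subsingleton_of_forall_eq 0 fun z => ?_
    induction z using Module.DirectLimit.induction_on with
    | ih i x =>
      have h1 : Module.DirectLimit.of R ℕ (fun _ : ℕ => V) (fun i j _ => ψ ^ (j - i)) i x =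
          Module.DirectLimit.of R ℕ (fun _ : ℕ => V) (fun i j _ => ψ ^ (j - i)) (i + N)
            ((ψ ^ (i + N - i)) x) :=
        (Module.DirectLimit.of_f (hij := Nat.le_add_right i N)).symm
      rw [h1]
      have : i + N - i = N := by omega
      rw [this, hN]
      simp

/-- For an endomorphism `φ` of a finite free module `F = (Fin n → R)` over a commutative local
ring `(R, m)`, the mapping telescope (direct limit of `F → F → ⋯` with transition maps the
powers of `φ`) vanishes modulo `m` if and only if the reduction of `φ` modulo `m` is a nilpotent
endomorphism of `F/mF`. -/
theorem telescope_tensor_residue_eq_zero_iff_isNilpotent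
    {R : Type*} [CommRing R] [IsLocalRing R] {n : ℕ}
    (φ : (Fin n → R) →ₗ[R] (Fin n → R)) :
    Subsingleton ((R ⧸ IsLocalRing.maximalIdeal R) ⊗[R]
        Module.DirectLimit (fun _ : ℕ => Fin n → R) (fun i j _ => φ ^ (j - i))) ↔
      IsNilpotent (LinearMap.lTensor (R ⧸ IsLocalRing.maximalIdeal R) φ) := by
  set k := R ⧸ IsLocalRing.maximalIdeal R with hk
  let e1 := TensorProduct.directLimitRight (fun i j (_ : i ≤ j) => φ ^ (j - i)) k
  let e2 := Module.DirectLimit.congr (R := R) (ι := ℕ)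
      (G := fun _ : ℕ => k ⊗[R] (Fin n → R)) (G' := fun _ : ℕ => k ⊗[R] (Fin n → R))
      (f := fun i j _ => LinearMap.lTensor k (φ ^ (j - i)))
      (f' := fun i j _ => (LinearMap.lTensor k φ) ^ (j - i))
      (fun _ => LinearEquiv.refl R _)
      (fun i j h => by
        simp only [LinearEquiv.refl_toLinearMap, LinearMap.comp_id, LinearMap.id_comp,
          LinearMap.lTensor_pow])
  rw [(e1.trans e2).toEquiv.subsingleton_congr]
  exact telescope_subsingleton_iff_isNilpotent _
end

section
/- Let k be a field, V a finite-dimensional k-vector space, and ψ : V → V a k-linear endomorphism. The direct limit of the ℕ-indexed directed system V → V → V → ⋯, in which every object is V and every transition map from stage i to stage j is ψ^(j−i), is the zero module if and only if ψ is nilpotent. -/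
instance psiDirectedSystem {k : Type*} [Field k] {V : Type*} [AddCommGroup V] [Module k V]
    (ψ : V →ₗ[k] V) :
    DirectedSystem (fun _ : ℕ => V) (fun i j (_ : i ≤ j) x => (ψ ^ (j - i)) x) where
  map_self i x := by simp
  map_map {i j l} hij hjl x := by
    rw [← Module.End.mul_apply, ← pow_add]
    have h : ∀ a b c : ℕ, a ≤ b → b ≤ c → c - b + (b - a) = c - a := fun _ _ _ _ _ => by omega
    rw [h _ _ _ hij hjl]

/-- For an endomorphism `ψ` of a finite-dimensional vector space `V` over a field `k`, the
direct limit of the system `V → V → ⋯` with transition maps the powers of `ψ`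
is zero if and only if `ψ` is nilpotent. -/
theorem directLimit_subsingleton_iff_isNilpotent
    {k : Type*} [Field k] {V : Type*} [AddCommGroup V] [Module k V]
    [FiniteDimensional k V] (ψ : V →ₗ[k] V) :
    Subsingleton (Module.DirectLimit (fun _ : ℕ => V) (fun i j _ => ψ ^ (j - i))) ↔
      IsNilpotent ψ := by
  constructor
  · intro h
    -- every vector is killed by some power of ψ
    have key : ∀ x : V, ∃ n : ℕ, (ψ ^ n) x = 0 := by
      intro x
      have h0 : Module.DirectLimit.of k ℕ (fun _ : ℕ => V) (fun i j _ => ψ ^ (j - i)) 0 x = 0 :=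
        Subsingleton.elim _ _
      obtain ⟨j, hj, hxj⟩ := Module.DirectLimit.of.zero_exact h0
      exact ⟨j, by simpa using hxj⟩
    let b := Module.finBasis k V
    choose n hn using fun i => key (b i)
    set N := Finset.univ.sup n with hN
    refine ⟨N, ?_⟩
    apply b.ext
    intro i
    have hle : n i ≤ N := Finset.le_sup (Finset.mem_univ i)
    have : ψ ^ N = ψ ^ (N - n i) * ψ ^ (n i) := by
      rw [← pow_add]; congr 1; omega
    simp [this, Module.End.mul_apply, hn i]
  · rintro ⟨n, hn⟩
    constructor
    intro x y
    refine Module.DirectLimit.induction_on x fun i a => ?_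
    refine Module.DirectLimit.induction_on y fun j b => ?_
    have key : ∀ (i : ℕ) (a : V),
        Module.DirectLimit.of k ℕ (fun _ : ℕ => V) (fun i j _ => ψ ^ (j - i)) i a = 0 := by
      intro i a
      rw [← Module.DirectLimit.of_f (i := i) (j := i + n) (hij := Nat.le_add_right i n)]
      have : i + n - i = n := by omega
      simp [this, hn]
    rw [key i a, key j b]
end

section
/- Let (R, m) be a commutative Noetherian local ring with maximal ideal m, and let M be a flat R-module. Then the m-adic completion of M, i.e., the inverse limit lim_k M/m^k M, is a flat R-module. -/
/-!
By the equational criterion it suffices that every relation `∑ fᵢ cᵢ = 0` in `M̂` be trivial.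
Present the relations among the `fᵢ` by an exact sequence `Rᵗ → Rᶥ → R`. Tensoring with the flat
module `M` keeps it exact, and since `M ⊗ -` commutes with intersections of submodules, the
Artin–Rees lemma for the finite modules `Rᶥ` and `R` passes to the images in `M ⊗ Rᶥ` and `M ⊗ R`.
With these Artin–Rees bounds, `I`-adic completion keeps the sequence exact, so `c`, which dies in
the completion of `M ⊗ R`, lifts to the completion of `M ⊗ Rᵗ`: that lift is the trivial relation.
-/

open LinearMap TensorProduct

namespace Submodule

variable {R : Type*} [CommRing R] {N : Type*} [AddCommGroup N] [Module R N]

def HasArtinRees (S : Submodule R N) (I : Ideal R) : Prop :=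
  ∃ c, ∀ n, I ^ (n + c) • (⊤ : Submodule R N) ⊓ S ≤ I ^ n • S

theorem hasArtinRees_of_finite [IsNoetherianRing R] [Module.Finite R N] (S : Submodule R N)
    (I : Ideal R) : S.HasArtinRees I := by
  obtain ⟨k, hk⟩ := Ideal.exists_pow_inf_eq_pow_smul I S
  refine ⟨k, fun n => ?_⟩
  rw [hk (n + k) (Nat.le_add_left k n), Nat.add_sub_cancel]
  exact smul_mono_right _ inf_le_right

end Submodule

section FlatTensor

variable {R : Type*} [CommRing R] (M : Type*) [AddCommGroup M] [Module R M]
  {N : Type*} [AddCommGroup N] [Module R N]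

theorem range_lTensor_eq_range_lTensor_subtype {N' : Type*} [AddCommGroup N'] [Module R N']
    (h : N' →ₗ[R] N) : range (lTensor M h) = range (lTensor M (range h).subtype) := by
  conv_lhs => rw [show h = (range h).subtype ∘ₗ h.rangeRestrict from rfl]
  rw [lTensor_comp, range_comp,
    range_eq_top.mpr (lTensor_surjective M h.surjective_rangeRestrict), Submodule.map_top]

theorem range_lTensor_subtype_top : range (lTensor M (⊤ : Submodule R N).subtype) = ⊤ := by
  rw [← range_id, ← range_lTensor_eq_range_lTensor_subtype, lTensor_id, range_id]

theorem range_lTensor_subtype_mono {P Q : Submodule R N} (hPQ : P ≤ Q) :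
    range (lTensor M P.subtype) ≤ range (lTensor M Q.subtype) := by
  rw [← Submodule.subtype_comp_inclusion P Q hPQ, lTensor_comp]
  exact range_comp_le_range _ _

theorem range_lTensor_subtype_smul (I : Ideal R) (P : Submodule R N) :
    range (lTensor M (I • P).subtype) = I • range (lTensor M P.subtype) := by
  apply le_antisymm
  · rintro _ ⟨z, rfl⟩
    induction z using TensorProduct.induction_on with
    | zero => simp
    | tmul m p =>
      obtain ⟨p, hp⟩ := p
      simp only [lTensor_tmul, Submodule.subtype_apply]
      induction hp using Submodule.smul_induction_on' with
      | smul r hr p hp =>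
        rw [tmul_smul]
        exact Submodule.smul_mem_smul hr ⟨m ⊗ₜ ⟨p, hp⟩, rfl⟩
      | add p _ q _ hp hq => rw [tmul_add]; exact add_mem hp hq
    | add z w hz hw => rw [map_add]; exact add_mem hz hw
  · refine Submodule.smul_le.mpr fun r hr _ ⟨z, hz⟩ => hz ▸ ?_
    clear hz
    induction z using TensorProduct.induction_on with
    | zero => simp
    | tmul m p =>
      refine ⟨m ⊗ₜ ⟨r • (p : N), Submodule.smul_mem_smul hr p.2⟩, ?_⟩
      simp [tmul_smul]
    | add z w hz hw => rw [map_add, smul_add]; exact add_mem hz hw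

theorem range_lTensor_subtype_inf [Module.Flat R M] (P Q : Submodule R N) :
    range (lTensor M (P ⊓ Q).subtype) =
      range (lTensor M P.subtype) ⊓ range (lTensor M Q.subtype) := by
  refine le_antisymm (le_inf (range_lTensor_subtype_mono M inf_le_left)
    (range_lTensor_subtype_mono M inf_le_right)) ?_
  rintro _ ⟨⟨z, rfl⟩, hzQ⟩
  have hexact : Function.Exact (Submodule.inclusion inf_le_left : ↥(P ⊓ Q) →ₗ[R] P)
      (Q.mkQ ∘ₗ P.subtype) := by
    intro p
    simp only [comp_apply, Submodule.mkQ_apply, Submodule.subtype_apply,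
      Submodule.Quotient.mk_eq_zero, Set.mem_range]
    exact ⟨fun hp => ⟨⟨p, p.2, hp⟩, rfl⟩, by rintro ⟨q, rfl⟩; exact q.2.2⟩
  have hz : lTensor M (Q.mkQ ∘ₗ P.subtype) z = 0 := by
    obtain ⟨w, hw⟩ := hzQ
    have hQ : Q.mkQ ∘ₗ Q.subtype = 0 := by ext; simp
    rw [lTensor_comp, comp_apply, ← hw, ← comp_apply, ← lTensor_comp, hQ, lTensor_zero,
      LinearMap.zero_apply]
  obtain ⟨w, rfl⟩ := (Module.Flat.lTensor_exact M hexact z).mp hz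
  exact ⟨w, by rw [← comp_apply, ← lTensor_comp]; rfl⟩

theorem hasArtinRees_range_lTensor [IsNoetherianRing R] [Module.Finite R N] [Module.Flat R M]
    (I : Ideal R) {N' : Type*} [AddCommGroup N'] [Module R N'] (h : N' →ₗ[R] N) :
    (range (lTensor M h)).HasArtinRees I := by
  obtain ⟨c, hc⟩ := (range h).hasArtinRees_of_finite I
  refine ⟨c, fun n => ?_⟩
  rw [range_lTensor_eq_range_lTensor_subtype, ← range_lTensor_subtype_top M,
    ← range_lTensor_subtype_smul, ← range_lTensor_subtype_inf, ← range_lTensor_subtype_smul]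
  exact range_lTensor_subtype_mono M (hc n)

end FlatTensor

theorem exists_exact_linearCombination {R : Type*} [CommRing R] [IsNoetherianRing R]
    {ι : Type*} [Fintype ι] (f : ι → R) :
    ∃ (t : ℕ) (b : Fin t → ι → R),
      Function.Exact (Fintype.linearCombination R b) (Fintype.linearCombination R f) := by
  obtain ⟨t, b, hb⟩ := Submodule.fg_iff_exists_fin_generating_family.mp
    (IsNoetherian.noetherian (ker (Fintype.linearCombination R f)))
  exact ⟨t, b, LinearMap.exact_iff.mpr (by rw [Fintype.range_linearCombination, hb])⟩

namespace AdicCompletion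

section

variable {R : Type*} [CommRing R] (I : Ideal R)
  {M N : Type*} [AddCommGroup M] [Module R M] [AddCommGroup N] [Module R N]

theorem map_smul_apply (r : R) (g : M →ₗ[R] N) (x : AdicCompletion I M) :
    map I (r • g) x = r • map I g x := by
  induction x using induction_on with
  | h x => rfl

theorem map_sum_apply {ι : Type*} (s : Finset ι) (g : ι → M →ₗ[R] N) (x : AdicCompletion I M) :
    map I (∑ j ∈ s, g j) x = ∑ j ∈ s, map I (g j) x := by
  have hadd (g₁ g₂ : M →ₗ[R] N) : map I (g₁ + g₂) x = map I g₁ x + map I g₂ x := by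
    induction x using induction_on with
    | h x => rfl
  classical
  induction s using Finset.induction_on with
  | empty => simp [map_zero]
  | insert j s hj ih => rw [Finset.sum_insert hj, Finset.sum_insert hj, hadd, ih]

end

section

variable {R : Type*} [CommRing R] {I : Ideal R}
  {N' N P : Type*} [AddCommGroup N'] [Module R N'] [AddCommGroup N] [Module R N]
  [AddCommGroup P] [Module R P]

theorem exists_adicCauchySequence_ker_smodEq {F : N →ₗ[R] P} {c : ℕ}
    (hc : ∀ n, I ^ (n + c) • (⊤ : Submodule R P) ⊓ range F ≤ I ^ n • range F)
    (x : AdicCauchySequence I N) (hx : ∀ n, F (x n) ∈ (I ^ n • ⊤ : Submodule R P)) :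
    ∃ x' : AdicCauchySequence I N,
      ∀ n, F (x' n) = 0 ∧ x' n ≡ x (n + c) [SMOD (I ^ n • ⊤ : Submodule R N)] := by
  have hcorr (n : ℕ) : ∃ d ∈ (I ^ n • ⊤ : Submodule R N), F d = F (x (n + c)) := by
    have h := hc n ⟨hx (n + c), mem_range_self F _⟩
    rwa [← Submodule.map_top, ← Submodule.map_smul''] at h
  choose d hd hFd using hcorr
  have hle (n : ℕ) : (I ^ (n + c) • ⊤ : Submodule R N) ≤ I ^ n • ⊤ :=
    Submodule.smul_mono_left (Ideal.pow_le_pow_right (Nat.le_add_right n c))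
  refine ⟨AdicCauchySequence.mk I N (fun n => x (n + c) - d n) fun n => ?_, fun n => ?_⟩
  · rw [SModEq.sub_mem]
    have hx' := SModEq.sub_mem.mp (x.property (Nat.le_succ (n + c)))
    rw [Nat.succ_eq_add_one, Nat.add_right_comm] at hx'
    convert Submodule.add_mem _ (Submodule.sub_mem _ (hle n hx') (hd n))
      (Submodule.smul_mono_left (Ideal.pow_le_pow_right n.le_succ) (hd (n + 1))) using 1
    abel
  · refine ⟨by simp [hFd], SModEq.sub_mem.mpr ?_⟩
    simpa using Submodule.neg_mem _ (hd n)

theorem exists_adicCauchySequence_map_eq {G : N' →ₗ[R] N} {c : ℕ}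
    (hc : ∀ n, I ^ (n + c) • (⊤ : Submodule R N) ⊓ range G ≤ I ^ n • range G)
    (x : AdicCauchySequence I N) (hx : ∀ n, x n ∈ range G) :
    ∃ u : AdicCauchySequence I N', ∀ n, G (u n) = x (n + c) := by
  have hstep (n : ℕ) : ∃ v ∈ (I ^ n • ⊤ : Submodule R N'), G v = x (n + 1 + c) - x (n + c) := by
    have hdiff := SModEq.sub_mem.mp (x.property (Nat.le_succ (n + c))).symm
    rw [Nat.succ_eq_add_one, Nat.add_right_comm] at hdiff
    have h := hc n ⟨hdiff, sub_mem (hx _) (hx _)⟩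
    rwa [← Submodule.map_top, ← Submodule.map_smul''] at h
  choose v hv hGv using hstep
  obtain ⟨u₀, hu₀⟩ := hx c
  refine ⟨AdicCauchySequence.mk I N' (fun n => u₀ + ∑ k ∈ Finset.range n, v k) fun n => ?_,
    fun n => ?_⟩
  · rw [SModEq.sub_mem, Finset.sum_range_succ]
    simpa using Submodule.neg_mem _ (hv n)
  · change G (u₀ + ∑ k ∈ Finset.range n, v k) = _
    rw [map_add, map_sum, hu₀]
    simp only [hGv]
    rw [Finset.sum_range_sub (fun k => x (k + c)), zero_add]
    abel

theorem map_exact_of_hasArtinRees {G : N' →ₗ[R] N} {F : N →ₗ[R] P} (hGF : Function.Exact G F)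
    (hG : (range G).HasArtinRees I) (hF : (range F).HasArtinRees I) :
    Function.Exact (map I G) (map I F) := by
  refine exact_of_comp_eq_zero_of_ker_le_range ?_ fun y hy => ?_
  · rw [map_comp, hGF.linearMap_comp_eq_zero, map_zero]
  obtain ⟨x, rfl⟩ := mk_surjective I N y
  obtain ⟨c₁, hc₁⟩ := hF
  obtain ⟨c₂, hc₂⟩ := hG
  have hFx (n : ℕ) : F (x n) ∈ (I ^ n • ⊤ : Submodule R P) := by
    simpa using congrArg (fun z => z.val n) hy
  obtain ⟨x', hx'⟩ := exists_adicCauchySequence_ker_smodEq hc₁ x hFx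
  obtain ⟨u, hu⟩ := exists_adicCauchySequence_map_eq hc₂ x' fun n => (hGF _).mp (hx' n).1
  refine ⟨mk I N' u, ext fun n => ?_⟩
  have hx'x : x' (n + c₂) ≡ x (n + c₂ + c₁) [SMOD (I ^ n • ⊤ : Submodule R N)] :=
    (hx' (n + c₂)).2.mono
      (Submodule.smul_mono_left (Ideal.pow_le_pow_right (Nat.le_add_right n c₂)))
  have hxx : x (n + c₂ + c₁) ≡ x n [SMOD (I ^ n • ⊤ : Submodule R N)] :=
    (x.property (by omega)).symm
  simpa [hu, SModEq] using hx'x.trans hxx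

end

variable {R : Type*} [CommRing R] {I : Ideal R} {M : Type*} [AddCommGroup M] [Module R M]

theorem isTrivialRelation_of_sum_smul_eq_zero [IsNoetherianRing R] [Module.Flat R M]
    {ι : Type*} [Fintype ι] {f : ι → R} {c : ι → AdicCompletion I M}
    (hfc : ∑ i, f i • c i = 0) : Module.IsTrivialRelation f c := by
  classical
  obtain ⟨t, b, hψφ⟩ := exists_exact_linearCombination f
  set φ := Fintype.linearCombination R f
  set ψ := Fintype.linearCombination R b
  have hexact : Function.Exact (map I (lTensor M ψ)) (map I (lTensor M φ)) :=
    map_exact_of_hasArtinRees (Module.Flat.lTensor_exact M hψφ)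
      (hasArtinRees_range_lTensor M I ψ) (hasArtinRees_range_lTensor M I φ)
  let e (i : ι) : M →ₗ[R] M ⊗[R] (ι → R) := (TensorProduct.mk R M (ι → R)).flip (Pi.single i 1)
  let π (i : ι) : M ⊗[R] (ι → R) →ₗ[R] M := TensorProduct.rid R M ∘ₗ lTensor M (proj i)
  let ρ (j : Fin t) : M ⊗[R] (Fin t → R) →ₗ[R] M := TensorProduct.rid R M ∘ₗ lTensor M (proj j)
  -- `c` read as an element of the completion of `M ⊗ Rᶥ ≅ Mᶥ`
  set ĉ := ∑ i, map I (e i) (c i)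
  have hĉ : map I (lTensor M φ) ĉ = 0 := by
    let ε := (TensorProduct.mk R M R).flip 1
    have hφe (i : ι) : lTensor M φ ∘ₗ e i = f i • ε := by
      ext m
      simp [φ, e, ε, ← tmul_smul]
    calc map I (lTensor M φ) ĉ = ∑ i, f i • map I ε (c i) := by
          simp only [ĉ, map_sum, map_comp_apply, hφe, map_smul_apply]
      _ = map I ε (∑ i, f i • c i) := by simp only [map_sum, LinearMap.map_smul_of_tower]
      _ = 0 := by rw [hfc, LinearMap.map_zero]
  obtain ⟨ŷ, hŷ⟩ := (hexact ĉ).mp hĉ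
  refine ⟨t, fun i j => b j i, fun j => map I (ρ j) ŷ, fun i => ?_, fun j => ?_⟩
  · have hπψ : π i ∘ₗ lTensor M ψ = ∑ j, b j i • ρ j := TensorProduct.ext' fun m v => by
      simp [π, ρ, ψ, Fintype.linearCombination_apply, Finset.sum_smul, mul_smul, mul_comm]
    have hπe (k : ι) : π i ∘ₗ e k = (Pi.single (M := fun _ => R) k 1 i) • LinearMap.id := by
      ext m; simp [π, e]
    calc c i = map I (π i) ĉ := by
          simp only [ĉ, map_sum, map_comp_apply, hπe, map_smul_apply, map_id, LinearMap.id_apply]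
          simp [Pi.single_apply]
      _ = map I (π i) (map I (lTensor M ψ) ŷ) := by rw [hŷ]
      _ = ∑ j, b j i • map I (ρ j) ŷ := by
          rw [map_comp_apply, hπψ, map_sum_apply]; simp [map_smul_apply]
  · simpa [φ, ψ, Fintype.linearCombination_apply, Pi.single_apply, mul_comm] using
      hψφ.apply_apply_eq_zero (Pi.single j 1)

end AdicCompletion

instance AdicCompletion.flat {R : Type*} [CommRing R] [IsNoetherianRing R] (I : Ideal R)
    (M : Type*) [AddCommGroup M] [Module R M] [Module.Flat R M] :
    Module.Flat R (AdicCompletion I M) :=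
  Module.Flat.of_forall_isTrivialRelation AdicCompletion.isTrivialRelation_of_sum_smul_eq_zero

/-- Over a commutative Noetherian local ring `(R, m)`, the `m`-adic completion of a flat
`R`-module is flat. -/
theorem flat_adicCompletion_of_flat
    {R : Type*} [CommRing R] [IsNoetherianRing R] [IsLocalRing R]
    (M : Type*) [AddCommGroup M] [Module R M] [Module.Flat R M] :
    Module.Flat R (AdicCompletion (IsLocalRing.maximalIdeal R) M) :=
  inferInstance
end

section
/- Let R be a commutative ring, r ∈ R, and M an R-module. The direct limit of the ℕ-indexed directed system M → M → M → ⋯, in which every object is M and the transition map from stage i to stage j is scalar multiplication by r^(j−i), is isomorphic as an R-module to the localization of M at the multiplicative set of powers of r (the localized module M[1/r]). -/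
/-- The mapping telescope of multiplication by `r` on `M`, i.e. the direct limit of
`M → M → ⋯` where the transition map from stage `i` to stage `j` is scalar multiplication
by `r ^ (j - i)`, is isomorphic to the localized module `M[1/r]`. -/
theorem directLimit_smul_pow_iso_localizedModule
    {R : Type*} [CommRing R] (r : R) (M : Type*) [AddCommGroup M] [Module R M] :
    Nonempty ((Module.DirectLimit (fun _ : ℕ => M)
        (fun i j _ => r ^ (j - i) • (LinearMap.id : M →ₗ[R] M))) ≃ₗ[R]
      LocalizedModule (Submonoid.powers r) M) := by
  set f : ∀ i j : ℕ, i ≤ j → M →ₗ[R] M :=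
    fun i j _ => r ^ (j - i) • (LinearMap.id : M →ₗ[R] M) with hf
  haveI : DirectedSystem (fun _ : ℕ => M) fun i j h => f i j h := by
    constructor
    · intro i x; simp [hf]
    · intro i j k hij hjk x
      simp only [hf, LinearMap.smul_apply, LinearMap.id_apply, smul_smul, ← pow_add]
      congr 2
      omega
  -- the maps to the localized module
  set g : ∀ i : ℕ, M →ₗ[R] LocalizedModule (Submonoid.powers r) M :=
    fun i =>
      { toFun := fun m => LocalizedModule.mk m ⟨r ^ i, ⟨i, rfl⟩⟩
        map_add' := fun x y => by
          rw [LocalizedModule.mk_add_mk, ← smul_add, LocalizedModule.mk_cancel_common_left]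
        map_smul' := fun c x => by rw [RingHom.id_apply, LocalizedModule.smul'_mk] } with hg
  have Hg : ∀ i j (hij : i ≤ j) (x : M), g j (f i j hij x) = g i x := by
    intro i j hij x
    simp only [hg, hf, LinearMap.smul_apply, LinearMap.id_apply, LinearMap.coe_mk,
      AddHom.coe_mk]
    rw [LocalizedModule.mk_eq]
    refine ⟨1, ?_⟩
    simp only [one_mul, Submonoid.smul_def, smul_smul, ← pow_add]
    rw [Nat.add_sub_cancel' hij]

  set F := Module.DirectLimit.lift R ℕ (fun _ : ℕ => M) f g Hg with hF
  have hsurj : Function.Surjective F := by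
    intro z
    induction z using LocalizedModule.induction_on with
    | h m s =>
      obtain ⟨i, hi⟩ := s.2
      refine ⟨Module.DirectLimit.of R ℕ (fun _ : ℕ => M) f i m, ?_⟩
      rw [hF, Module.DirectLimit.lift_of]
      simp only [hg, LinearMap.coe_mk, AddHom.coe_mk]
      congr 1
      exact Subtype.ext hi
  have hinj : Function.Injective F := by
    rw [injective_iff_map_eq_zero]
    intro z hz
    induction z using Module.DirectLimit.induction_on with
    | ih i x =>
      rw [hF, Module.DirectLimit.lift_of] at hz
      simp only [hg, LinearMap.coe_mk, AddHom.coe_mk] at hz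
      rw [show (0 : LocalizedModule (Submonoid.powers r) M) = LocalizedModule.mk 0 1 from
        (LocalizedModule.zero_mk 1).symm, LocalizedModule.mk_eq] at hz
      obtain ⟨u, hu⟩ := hz
      obtain ⟨k, hk⟩ := u.2
      have hz' : r ^ k • x = 0 := by
        have h2 := hu
        simp only [one_smul, smul_zero, Submonoid.smul_def] at h2
        rw [show r ^ k = (u : R) from hk]
        exact h2
      rw [← Module.DirectLimit.of_f (R := R) (ι := ℕ) (G := fun _ : ℕ => M) (f := f)
        (i := i) (j := i + k) (hij := Nat.le_add_right i k)]
      have : f i (i + k) (Nat.le_add_right i k) x = 0 := by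
        simp only [hf, LinearMap.smul_apply, LinearMap.id_apply]
        rw [show i + k - i = k by omega, hz']
      rw [this, map_zero]
  exact ⟨LinearEquiv.ofBijective F ⟨hinj, hsurj⟩⟩
end

section
/- Let p be a prime and let M be a flat (equivalently, torsion-free) module over the ring ℤ_p of p-adic integers. Let M[[x]] denote the module of sequences ℕ → M, viewed as power series Σ aₙ xⁿ with coefficients in M, and let T : M[[x]] → M[[x]] be the ℤ_p-linear map given by multiplication by x − p, i.e., (T a)₀ = −p·a₀ and (T a)ₙ = a_{n−1} − p·aₙ for n ≥ 1. Then the cokernel of T is isomorphic as a ℤ_p-module to the p-adic completion of M, i.e., to the inverse limit lim_k M/p^k M. -/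
/-!
Evaluation at `x = p`, `∑ aₙ xⁿ ↦ ∑ aₙ pⁿ`, makes sense in the `p`-adic completion of `M`, and it
is onto: a compatible family `(bₖ)` is the sum of the telescoping series `b₀ + ∑ (bₖ₊₁ - bₖ)` whose
`k`-th term is divisible by `pᵏ`. Its kernel is the image of multiplication by `x - p`: if every
partial sum `∑_{n<k} aₙ pⁿ` equals `pᵏ cₖ`, then, since `p` is regular on the flat module `M`,
`p cₖ₊₁ = cₖ + aₖ`, which says exactly that `∑ aₙ xⁿ = (x - p) ∑ -cₙ₊₁ xⁿ`.
-/

open Submodule AdicCompletion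

section

variable {R M : Type*} [CommRing R] [AddCommGroup M] [Module R M]

lemma mem_span_singleton_pow_smul_top_iff (r : R) (k : ℕ) (x : M) :
    x ∈ (Ideal.span {r} ^ k • ⊤ : Submodule R M) ↔ ∃ y : M, r ^ k • y = x := by
  rw [Ideal.span_singleton_pow, ideal_span_singleton_smul, ← SetLike.mem_coe,
    coe_pointwise_smul, Set.mem_smul_set]
  simp

def truncEval (r : R) (k : ℕ) : (ℕ → M) →ₗ[R] M where
  toFun a := ∑ n ∈ Finset.range k, r ^ n • a n
  map_add' a b := by simp [Finset.sum_add_distrib]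
  map_smul' c a := by simp [Finset.smul_sum, smul_comm c]

lemma truncEval_zero (r : R) (a : ℕ → M) : truncEval r 0 a = 0 := rfl

lemma truncEval_succ (r : R) (k : ℕ) (a : ℕ → M) :
    truncEval r (k + 1) a = truncEval r k a + r ^ k • a k :=
  Finset.sum_range_succ _ _

lemma truncEval_succ_single_zero (r : R) (k : ℕ) (x : M) :
    truncEval r (k + 1) (Pi.single 0 x) = x := by
  simp [truncEval, Finset.sum_range_succ']

/-- `∑ aₙ xⁿ ↦ ∑ aₙ rⁿ`, a sequence `a : ℕ → M` being read as a power series over `M`. -/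
noncomputable def adicEval (r : R) : (ℕ → M) →ₗ[R] AdicCompletion (Ideal.span {r}) M :=
  AdicCompletion.mk _ M ∘ₗ
    { toFun a := AdicCauchySequence.mk _ M (fun k ↦ truncEval r k a) fun k ↦ by
        rw [SModEq.comm, SModEq.sub_mem, truncEval_succ, add_sub_cancel_left,
          mem_span_singleton_pow_smul_top_iff]
        exact ⟨a k, rfl⟩
      map_add' a b := by ext; simp
      map_smul' c a := by ext; simp }

lemma adicEval_val (r : R) (a : ℕ → M) (k : ℕ) :
    (adicEval r a).val k = Submodule.Quotient.mk (truncEval r k a) := rfl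

lemma adicEval_eq_zero_iff (r : R) (a : ℕ → M) :
    adicEval r a = 0 ↔ ∀ k, ∃ c : M, r ^ k • c = truncEval r k a := by
  simp only [AdicCompletion.ext_iff, adicEval_val, val_zero_apply, Quotient.mk_eq_zero,
    mem_span_singleton_pow_smul_top_iff]

lemma adicEval_surjective (r : R) : Function.Surjective (adicEval (M := M) r) := by
  intro f
  obtain ⟨b, rfl⟩ := AdicCompletion.mk_surjective _ M f
  have hstep (k : ℕ) : ∃ d : M, r ^ k • d = b (k + 1) - b k := by
    rw [← mem_span_singleton_pow_smul_top_iff, ← SModEq.sub_mem, SModEq.comm]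
    exact b.property k.le_succ
  choose d hd using hstep
  refine ⟨d + Pi.single 0 (b 0), AdicCompletion.ext fun k ↦ ?_⟩
  rcases k with _ | k
  · exact (Submodule.Quotient.eq _).2 (by simp)
  · have htel : truncEval r (k + 1) d = b (k + 1) - b 0 :=
      (Finset.sum_congr rfl fun n _ ↦ hd n).trans (Finset.sum_range_sub _ _)
    have : truncEval r (k + 1) (d + Pi.single 0 (b 0)) = b (k + 1) := by
      rw [map_add, htel, truncEval_succ_single_zero, sub_add_cancel]
    rw [adicEval_val, this]
    rfl

def mulXSub (r : R) : (ℕ → M) →ₗ[R] (ℕ → M) where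
  toFun a
    | 0 => -(r • a 0)
    | n + 1 => a n - r • a (n + 1)
  map_add' a b := by
    funext n
    rcases n with _ | n
    · simp [add_comm]
    · simp only [Pi.add_apply, smul_add]; abel
  map_smul' c a := by
    funext n
    rcases n with _ | n
    · simp [smul_comm c r]
    · simp [smul_sub, smul_comm c r]

@[simp] lemma mulXSub_apply_zero (r : R) (a : ℕ → M) : mulXSub r a 0 = -(r • a 0) := rfl

@[simp] lemma mulXSub_apply_succ (r : R) (a : ℕ → M) (n : ℕ) :
    mulXSub r a (n + 1) = a n - r • a (n + 1) := rfl

lemma truncEval_succ_mulXSub (r : R) (b : ℕ → M) (k : ℕ) :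
    truncEval r (k + 1) (mulXSub r b) = -(r ^ (k + 1) • b k) := by
  induction k with
  | zero => simp [truncEval]
  | succ k ih =>
    rw [truncEval_succ, ih, mulXSub_apply_succ, smul_sub, smul_smul, ← pow_succ]
    abel

lemma adicEval_mulXSub (r : R) (b : ℕ → M) : adicEval r (mulXSub r b) = 0 := by
  rw [adicEval_eq_zero_iff]
  rintro (_ | k)
  · exact ⟨0, by simp [truncEval_zero]⟩
  · exact ⟨-b k, by rw [truncEval_succ_mulXSub, smul_neg]⟩

lemma eq_mulXSub_of_smul_eq {r : R} {a c : ℕ → M} (hc0 : c 0 = 0)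
    (hc : ∀ k, r • c (k + 1) = c k + a k) : a = mulXSub r (fun n ↦ -c (n + 1)) := by
  funext n
  rcases n with _ | n
  · simp [hc 0, hc0]
  · simp only [mulXSub_apply_succ, smul_neg, hc (n + 1)]; abel

lemma ker_adicEval_le_range_mulXSub {r : R} (hr : IsSMulRegular M r) :
    LinearMap.ker (adicEval (M := M) r) ≤ LinearMap.range (mulXSub r) := by
  intro a ha
  choose c hc using (adicEval_eq_zero_iff r a).1 ha
  have hc0 : c 0 = 0 := by simpa [truncEval_zero] using hc 0
  refine ⟨_, (eq_mulXSub_of_smul_eq hc0 fun k ↦ (hr.pow k) ?_).symm⟩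
  -- both sides times `r ^ k` are `truncEval r (k + 1) a`
  dsimp only
  rw [smul_smul, ← pow_succ, hc, smul_add, hc, truncEval_succ]

lemma ker_adicEval {r : R} (hr : IsSMulRegular M r) :
    LinearMap.ker (adicEval (M := M) r) = LinearMap.range (mulXSub r) :=
  le_antisymm (ker_adicEval_le_range_mulXSub hr) <| by
    rintro _ ⟨b, rfl⟩
    exact adicEval_mulXSub r b

noncomputable def quotRangeMulXSubEquiv {r : R} (hr : IsSMulRegular M r) :
    ((ℕ → M) ⧸ LinearMap.range (mulXSub (M := M) r)) ≃ₗ[R] AdicCompletion (Ideal.span {r}) M :=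
  (Submodule.quotEquivOfEq _ _ (ker_adicEval hr).symm).trans
    ((adicEval (M := M) r).quotKerEquivOfSurjective (adicEval_surjective r))

end

/-- Analytic `p`-completion: for a flat module `M` over the `p`-adic integers, the cokernel of
multiplication by `x - p` on the module `M⟦x⟧ = (ℕ → M)` of power series with coefficients in
`M` is the `p`-adic completion of `M`. Here `T` is multiplication by `x - p`, characterized
coefficientwise by `(T a)₀ = -p • a₀` and `(T a)ₙ = a_{n-1} - p • aₙ` for `n ≥ 1`. -/
theorem coker_mul_x_sub_p_iso_adicCompletion
    (p : ℕ) [Fact p.Prime] (M : Type*) [AddCommGroup M] [Module ℤ_[p] M]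
    [Module.Flat ℤ_[p] M]
    (T : (ℕ → M) →ₗ[ℤ_[p]] (ℕ → M))
    (hT0 : ∀ a : ℕ → M, T a 0 = -((p : ℤ_[p]) • a 0))
    (hTsucc : ∀ (a : ℕ → M) (n : ℕ), T a (n + 1) = a n - (p : ℤ_[p]) • a (n + 1)) :
    Nonempty (((ℕ → M) ⧸ LinearMap.range T) ≃ₗ[ℤ_[p]]
      AdicCompletion (Ideal.span {(p : ℤ_[p])}) M) := by
  obtain rfl : T = mulXSub (p : ℤ_[p]) := by
    ext a n
    rcases n with _ | n
    · exact hT0 a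
    · exact hTsucc a n
  have hp : (p : ℤ_[p]) ∈ nonZeroDivisors ℤ_[p] :=
    mem_nonZeroDivisors_of_ne_zero (Nat.cast_ne_zero.mpr (Fact.out : p.Prime).ne_zero)
  exact ⟨quotRangeMulXSubEquiv (Module.Flat.isSMulRegular_of_nonZeroDivisors hp)⟩
end
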